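/- Let U be a set of literals, X a consistent subset of U, and a' an atom such that neither a' nor ¬a' occurs in U ∪ X. Let R(X, U−X, a') be the pair of flattening rules. Then for any interpretation I: if I ∩ U = X, then I satisfies exactly one of the two rules of R(X, U−X, a'); and if I ∩ U ≠ X, then I satisfies both rules of R(X, U−X, a'). -/

import Mathlib

open scoped Classical

noncomputable section

namespace LPMLN

/-- A ground literal: an atom (numbered by `ℕ`) or its classical negation. -/
inductive Lit where
  | pos : ℕ → Lit
  | neg : ℕ → Lit
deriving DecidableEq

/-- The complementary literal. -/
def Lit.compl : Lit → Lit
  | .pos a => .neg a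
  | .neg a => .pos a

/-- A finite set of literals is consistent if it contains no complementary pair. -/
def Consistent (I : Finset Lit) : Prop := ∀ l ∈ I, l.compl ∉ I

/-- An ASP rule, given by its head, positive body and negative body. -/
structure Rule where
  head : Finset Lit
  pos : Finset Lit
  neg : Finset Lit
deriving DecidableEq

/-- The literals occurring in a rule. -/
def Rule.lits (r : Rule) : Finset Lit := r.head ∪ r.pos ∪ r.neg

/-- Satisfaction of a rule by a set of literals. -/
def Sat (I : Finset Lit) (r : Rule) : Prop :=
  r.pos ⊆ I → r.neg ∩ I = ∅ → (r.head ∩ I).Nonempty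

/-- Satisfaction of an ASP program. -/
def SatProg (I : Finset Lit) (prog : Finset Rule) : Prop := ∀ r ∈ prog, Sat I r

/-- The GL-reduct of an ASP program w.r.t. an interpretation. -/
def glReduct (prog : Finset Rule) (I : Finset Lit) : Finset Rule :=
  (prog.filter fun r => r.neg ∩ I = ∅).image fun r => ⟨r.head, r.pos, ∅⟩

/-- `I` is a stable model of the ASP program `prog`: `I` is a consistent set of
literals satisfying the GL-reduct, no proper subset of which satisfies the GL-reduct. -/
def AspStable (prog : Finset Rule) (I : Finset Lit) : Prop :=
  Consistent I ∧ SatProg I (glReduct prog I) ∧ ∀ J ⊂ I, ¬ SatProg J (glReduct prog I)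

/-- A weight: a real number (soft rule) or the symbol `α` (hard rule). -/
inductive Weight where
  | soft : ℝ → Weight
  | hard : Weight

/-- The real value of a soft weight (hard weights get the dummy value 0). -/
def Weight.val : Weight → ℝ
  | .soft w => w
  | .hard => 0

/-- A weighted rule `w : r`. -/
structure WRule where
  w : Weight
  r : Rule

/-- An LPMLN program: a finite set of weighted rules. -/
abbrev Program := Finset WRule

/-- The LPMLN reduct `P_I`: the rules of `P` satisfied by `I`. -/
def reduct (P : Program) (I : Finset Lit) : Program := P.filter fun wr => Sat I wr.r

/-- The unweighted ASP counterpart of an LPMLN program. -/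
def unweighted (P : Program) : Finset Rule := P.image fun wr => wr.r

/-- `I` is a stable model of the LPMLN program `P`: `I` is a stable model of the
unweighted ASP counterpart of the LPMLN reduct `P_I`. -/
def Stable (P : Program) (I : Finset Lit) : Prop :=
  AspStable (unweighted (reduct P I)) I

/-- The literals occurring in an LPMLN program. -/
def litset (P : Program) : Finset Lit := P.biUnion fun wr => wr.r.lits

/-- `(X, Y)` is an SE-interpretation: a pair of interpretations with `X ⊆ Y`. -/
def SEInterp (X Y : Finset Lit) : Prop := Consistent X ∧ Consistent Y ∧ X ⊆ Y

/-- `(X, Y)` is an SE-model of the LPMLN program `P`: an SE-interpretation such that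
`X` satisfies the GL-reduct (w.r.t. `Y`) of the unweighted version of `P_Y`. -/
def SEModel (P : Program) (X Y : Finset Lit) : Prop :=
  SEInterp X Y ∧ SatProg X (glReduct (unweighted (reduct P Y)) Y)

/-- The number of hard rules of `P` satisfied by `I`. -/
def hardCount (P : Program) (I : Finset Lit) : ℕ :=
  ((reduct P I).filter fun wr => wr.w = Weight.hard).card

/-- The sum of the weights of the soft rules of `P` satisfied by `I`. -/
def softWeight (P : Program) (I : Finset Lit) : ℝ :=
  ∑ wr ∈ ((reduct P I).filter fun wr => wr.w ≠ Weight.hard), wr.w.val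

/-- The weight degree `W(P, I) = exp(Σ_{w:r ∈ P_I} w)`, viewed as the real-valued
function `A ↦ exp(c' + k'·A)` of the value `A` given to the symbol `α`, where `k'` is
the number of hard rules of `P` satisfied by `I` and `c'` the sum of the weights of the
soft rules of `P` satisfied by `I`. -/
def wdeg (P : Program) (I : Finset Lit) (A : ℝ) : ℝ :=
  Real.exp (softWeight P I + A * hardCount P I)

/-- The (finite) set of stable models of `P` (every stable model of `P` is a subset of
`litset P`). -/
def SMset (P : Program) : Finset (Finset Lit) :=
  (litset P).powerset.filter fun I => Stable P I

/-- The probability degree `Pr(P, I)`: the limit, as `α → ∞`, of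
`W(P, I) / Σ_{I' ∈ SM(P)} W(P, I')` if `I` is a stable model of `P`, and `0` otherwise. -/
def PrDeg (P : Program) (I : Finset Lit) : ℝ :=
  if Stable P I then
    Filter.limUnder Filter.atTop fun A => wdeg P I A / ∑ I' ∈ SMset P, wdeg P I' A
  else 0

/-- `I` is a probabilistic stable model of `P`: a stable model of `P` satisfying the
maximum number of hard rules of `P` (equivalently, with nonzero probability degree). -/
def PStable (P : Program) (I : Finset Lit) : Prop :=
  Stable P I ∧ ∀ J, Stable P J → hardCount P J ≤ hardCount P I

/-- Semi-strong equivalence: the extensions by any LPMLN program have the same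
stable models. -/
def SemiStrongEq (P Q : Program) : Prop :=
  ∀ R : Program, ∀ I, Stable (P ∪ R) I ↔ Stable (Q ∪ R) I

/-- p-ordinary equivalence: same stable models and same probability degrees. -/
def POrdEq (P Q : Program) : Prop :=
  (∀ I, Stable P I ↔ Stable Q I) ∧ ∀ I, Stable P I → PrDeg P I = PrDeg Q I

/-- p-strong equivalence: p-ordinary equivalence under every extension. -/
def PStrongEq (P Q : Program) : Prop := ∀ R : Program, POrdEq (P ∪ R) (Q ∪ R)

/-- Comparison of the symbolic weight degrees of two interpretations w.r.t. `P`: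
`exp(c + k·α) ≤ exp(c' + k'·α)` iff `k < k'`, or `k = k'` and `c ≤ c'`. -/
def WLe (P : Program) (I J : Finset Lit) : Prop :=
  hardCount P I < hardCount P J ∨
    (hardCount P I = hardCount P J ∧ softWeight P I ≤ softWeight P J)

/-- q-strong equivalence: same stable models under every extension, with
order-preserving weight degrees. -/
def QStrongEq (P Q : Program) : Prop :=
  ∀ R : Program,
    (∀ I, Stable (P ∪ R) I ↔ Stable (Q ∪ R) I) ∧
    ∀ X Y, Stable (P ∪ R) X → Stable (P ∪ R) Y → (WLe (P ∪ R) X Y ↔ WLe (Q ∪ R) X Y)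

/-- A soft stable model of `P`: a stable model of `P` satisfying all hard rules of `P`. -/
def SoftStable (P : Program) (I : Finset Lit) : Prop :=
  Stable P I ∧ ∀ wr ∈ P, wr.w = Weight.hard → Sat I wr.r

/-- A soft SE-model of `P`: an SE-model `(X, Y)` of `P` such that `Y` satisfies all
hard rules of `P`. -/
def SoftSEModel (P : Program) (X Y : Finset Lit) : Prop :=
  SEModel P X Y ∧ ∀ wr ∈ P, wr.w = Weight.hard → Sat Y wr.r

/-- The (finite) set of soft stable models of `P`. -/
def SSMset (P : Program) : Finset (Finset Lit) :=
  (litset P).powerset.filter fun I => SoftStable P I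

/-- The probability degree under the soft stable model semantics:
`Pr_s(P, X) = W_s(P, X) / Σ_{X' ∈ SSM(P)} W_s(P, X')`, where
`W_s(P, X) = exp(Σ_{w:r ∈ P^s, X ⊨ r} w)`. -/
def PrS (P : Program) (X : Finset Lit) : ℝ :=
  Real.exp (softWeight P X) / ∑ X' ∈ SSMset P, Real.exp (softWeight P X')

/-- sp-strong equivalence: p-strong equivalence under the soft stable model
semantics. -/
def SPStrongEq (P Q : Program) : Prop :=
  ∀ R : Program,
    (∀ I, SoftStable (P ∪ R) I ↔ SoftStable (Q ∪ R) I) ∧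
    ∀ X, SoftStable (P ∪ R) X → PrS (P ∪ R) X = PrS (Q ∪ R) X

/-- `(X, Y)` is a UE-model of `P`: an SE-model with `X = Y`, or with `X ⊊ Y` such that
no `X'` strictly between `X` and `Y` gives an SE-model `(X', Y)`. -/
def UEModel (P : Program) (X Y : Finset Lit) : Prop :=
  SEModel P X Y ∧
    (X = Y ∨ (X ⊂ Y ∧ ∀ X', X ⊂ X' → X' ⊂ Y → ¬ SEModel P X' Y))

/-- A program consisting of weighted facts only (rules with empty bodies). -/
def IsFactProg (R : Program) : Prop := ∀ wr ∈ R, wr.r.pos = ∅ ∧ wr.r.neg = ∅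

/-- p-uniform equivalence: p-ordinary equivalence under every extension by a set of
weighted facts. -/
def PUniformEq (P Q : Program) : Prop :=
  ∀ R : Program, IsFactProg R → POrdEq (P ∪ R) (Q ∪ R)

/-- The flattening rules `R(X, Y, a)`: the two hard rules
`α : ← X, not Y, a` and `α : a ← X, not Y`. -/
def flatten (X Y : Finset Lit) (a : ℕ) : Program :=
  {⟨Weight.hard, ⟨∅, X ∪ {Lit.pos a}, Y⟩⟩, ⟨Weight.hard, ⟨{Lit.pos a}, X, Y⟩⟩}

/-- The hard fact `α : l`. -/
def factOf (l : Lit) : WRule := ⟨Weight.hard, ⟨{l}, ∅, ∅⟩⟩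

/-- The base flattening extension `E⁰(P, U) = P ∪ {α : a | a ∈ U}`. -/
def E0 (P : Program) (U : Finset Lit) : Program := P ∪ U.image factOf

/-- `IsFlatExt P U k E` holds iff `E` is a flattening extension `E^k(P, U)`:
`E⁰(P, U) = P ∪ {α : a | a ∈ U}` and `E^{i+1}(P, U) = E^i(P, U) ∪ R(X ∩ U, U − X, c)`
where `X` is a probabilistic stable model of `E^i(P, U)` and `c` is a fresh atom. -/
inductive IsFlatExt (P : Program) (U : Finset Lit) : ℕ → Program → Prop
  | zero : IsFlatExt P U 0 (E0 P U)
  | succ {i : ℕ} {E : Program} {X : Finset Lit} {c : ℕ} :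
      IsFlatExt P U i E → PStable E X →
      Lit.pos c ∉ litset E → Lit.neg c ∉ litset E →
      IsFlatExt P U (i + 1) (E ∪ flatten (X ∩ U) (U \ X) c)

theorem _root_.Finset.inter_eq_iff_subset_and_sdiff_inter_eq_empty {α : Type*} [DecidableEq α]
    {I U X : Finset α} (hXU : X ⊆ U) : I ∩ U = X ↔ X ⊆ I ∧ (U \ X) ∩ I = ∅ := by
  simp only [Finset.ext_iff, Finset.subset_iff, Finset.mem_inter, Finset.mem_sdiff,
    Finset.notMem_empty, iff_false] at hXU ⊢
  grind

variable {I X Y : Finset Lit} {r : Rule} {l : Lit}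

theorem sat_of_not_body (h : ¬ (r.pos ⊆ I ∧ r.neg ∩ I = ∅)) : Sat I r :=
  fun hpos hneg => absurd ⟨hpos, hneg⟩ h

theorem sat_constraint_iff (hX : X ⊆ I) (hY : Y ∩ I = ∅) :
    Sat I ⟨∅, X ∪ {l}, Y⟩ ↔ l ∉ I := by
  simp [Sat, Finset.insert_subset_iff, hX, hY]

theorem sat_fact_iff (hX : X ⊆ I) (hY : Y ∩ I = ∅) : Sat I ⟨{l}, X, Y⟩ ↔ l ∈ I := by
  simp [Sat, hX, hY, Finset.Nonempty]

theorem flattening_rules_general (U X : Finset Lit) (a : ℕ)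
    (hXU : X ⊆ U)
    (I : Finset Lit) :
    (I ∩ U = X →
      Xor' (Sat I ⟨∅, X ∪ {Lit.pos a}, U \ X⟩) (Sat I ⟨{Lit.pos a}, X, U \ X⟩)) ∧
    (I ∩ U ≠ X →
      Sat I ⟨∅, X ∪ {Lit.pos a}, U \ X⟩ ∧ Sat I ⟨{Lit.pos a}, X, U \ X⟩) := by
  -- `I ∩ U = X` says exactly that the common body `X, not (U − X)` of both rules holds in `I`.
  rw [Ne, Finset.inter_eq_iff_subset_and_sdiff_inter_eq_empty hXU]
  constructor
  · rintro ⟨hX, hY⟩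
    rw [sat_constraint_iff hX hY, sat_fact_iff hX hY]
    exact xor_not_left.mpr Iff.rfl
  · intro hbody
    refine ⟨sat_of_not_body fun ⟨hpos, hneg⟩ => ?_, sat_of_not_body hbody⟩
    exact hbody ⟨(Finset.union_subset_iff.mp hpos).1, hneg⟩

/-- Let `U` be a set of literals, `X` a consistent subset of `U`, and `a`
an atom such that neither `a` nor `¬a` occurs in `U ∪ X`. Let `R(X, U−X, a)` be the
pair of flattening rules. Then for any interpretation `I`: if `I ∩ U = X`, then `I`
satisfies exactly one of the two rules of `R(X, U−X, a)`; and if `I ∩ U ≠ X`, then `I`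
satisfies both rules of `R(X, U−X, a)`. -/
theorem flattening_rules (U X : Finset Lit) (a : ℕ)
    (hXU : X ⊆ U) (hXcons : Consistent X)
    (ha1 : Lit.pos a ∉ U ∪ X) (ha2 : Lit.neg a ∉ U ∪ X)
    (I : Finset Lit) (hI : Consistent I) :
    (I ∩ U = X →
      Xor' (Sat I ⟨∅, X ∪ {Lit.pos a}, U \ X⟩) (Sat I ⟨{Lit.pos a}, X, U \ X⟩)) ∧
    (I ∩ U ≠ X →
      Sat I ⟨∅, X ∪ {Lit.pos a}, U \ X⟩ ∧ Sat I ⟨{Lit.pos a}, X, U \ X⟩) :=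
  flattening_rules_general U X a hXU I

end LPMLN
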